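/- In any conditional logic containing classical propositional logic, the axioms ID, CM, and CSO ((φ>ψ)∧(ψ>φ) → ((φ>χ) ↔ (ψ>χ))), and closed under RCEC, the rule RCEA (from φ ↔ ψ infer (φ>χ) ↔ (ψ>χ)) is derivable. -/
import Mathlib


inductive Form where
  | var : Nat → Form
  | bot : Form
  | neg : Form → Form
  | conj : Form → Form → Form
  | disj : Form → Form → Form
  | imp : Form → Form → Form
  | cond : Form → Form → Form

def Form.iff (p q : Form) : Form := Form.conj (Form.imp p q) (Form.imp q p)

/-- A boolean valuation respecting the classical connectives
(conditional subformulas are treated as atoms). -/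
def ClassVal (v : Form → Bool) : Prop :=
  v Form.bot = false ∧
  (∀ p, v (Form.neg p) = ! v p) ∧
  (∀ p q, v (Form.conj p q) = (v p && v q)) ∧
  (∀ p q, v (Form.disj p q) = (v p || v q)) ∧
  (∀ p q, v (Form.imp p q) = (! v p || v q))

/-- Classical tautologies. -/
def IsTaut (p : Form) : Prop := ∀ v, ClassVal v → v p = true

inductive Der : Form → Prop where
  | taut : ∀ p, IsTaut p → Der p
  | mp : ∀ p q, Der (Form.imp p q) → Der p → Der q
  | id : ∀ p, Der (Form.cond p p)
  | cm : ∀ p q r, Der (Form.imp (Form.cond p (Form.conj q r))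
      (Form.conj (Form.cond p q) (Form.cond p r)))
  | cso : ∀ p q r, Der (Form.imp (Form.conj (Form.cond p q) (Form.cond q p))
      (Form.iff (Form.cond p r) (Form.cond q r)))
  | rcec : ∀ p q r, Der (Form.iff p q) → Der (Form.iff (Form.cond r p) (Form.cond r q))


lemma taut_tac {p : Form} (h : IsTaut p) : Der p := Der.taut p h

lemma conj_left (a b : Form) (h : Der (Form.conj a b)) : Der a := by
  apply Der.mp (Form.conj a b) a _ h
  apply Der.taut
  intro v hv
  obtain ⟨_, _, h3, _, h5⟩ := hv
  simp [h5, h3]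
  cases v a <;> cases v b <;> simp_all

lemma conj_right (a b : Form) (h : Der (Form.conj a b)) : Der b := by
  apply Der.mp (Form.conj a b) b _ h
  apply Der.taut
  intro v hv
  obtain ⟨_, _, h3, _, h5⟩ := hv
  simp [h5, h3]
  cases v a <;> cases v b <;> simp_all

lemma conj_intro (a b : Form) (ha : Der a) (hb : Der b) : Der (Form.conj a b) := by
  apply Der.mp b _ _ hb
  apply Der.mp a (Form.imp b (Form.conj a b)) _ ha
  apply Der.taut
  intro v hv
  obtain ⟨_, _, h3, _, h5⟩ := hv
  simp [h5, h3]
  cases v a <;> cases v b <;> simp_all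

lemma iff_absorb (p q : Form) (h : Der (Form.iff p q)) :
    Der (Form.iff p (Form.conj p q)) := by
  apply Der.mp (Form.iff p q) _ _ h
  apply Der.taut
  intro v hv
  obtain ⟨_, _, h3, _, h5⟩ := hv
  simp [Form.iff, h5, h3]
  cases v p <;> cases v q <;> simp_all

lemma cond_conj (p q : Form) (h : Der (Form.iff p q)) : Der (Form.cond p q) := by
  have h1 := iff_absorb p q h
  have h2 := Der.rcec _ _ p h1
  have h3 : Der (Form.cond p (Form.conj p q)) := by
    apply Der.mp (Form.cond p p) _ _ (Der.id p)
    exact conj_left _ _ h2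
  have h4 := Der.mp _ _ (Der.cm p p q) h3
  exact conj_right _ _ h4

lemma iff_symm (p q : Form) (h : Der (Form.iff p q)) : Der (Form.iff q p) := by
  apply Der.mp (Form.iff p q) _ _ h
  apply Der.taut
  intro v hv
  obtain ⟨_, _, h3, _, h5⟩ := hv
  simp [Form.iff, h5, h3]
  cases v p <;> cases v q <;> simp_all

/-- RCEA is derivable: from φ ↔ ψ infer (φ>χ) ↔ (ψ>χ). -/
theorem rcea_derivable (p q r : Form) (h : Der (Form.iff p q)) :
    Der (Form.iff (Form.cond p r) (Form.cond q r)) := by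
  have hpq := cond_conj p q h
  have hqp := cond_conj q p (iff_symm p q h)
  exact Der.mp _ _ (Der.cso p q r) (conj_intro _ _ hpq hqp)
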